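/- (3-SAT reduction, backward direction) With G' as in the reduction, if the 3-SAT instance has a satisfying assignment φ, then there exists a subtree T' of G' rooted at r with C_{T'}(v) ≤ c_v for all v and exactly 1 + 2n + m vertices. -/
import Mathlib


open Finset

/-- A rooted tree on vertex type `V` with root `r`, encoded by a vertex set and a
parent function: every non-root vertex has a parent in the tree, and iterating
the parent function reaches the root. -/
structure RTree (V : Type) [DecidableEq V] (r : V) where
  verts : Finset V
  root_mem : r ∈ verts
  parent : V → V
  parent_mem : ∀ v ∈ verts, v ≠ r → parent v ∈ verts
  reach : ∀ v ∈ verts, ∃ n : ℕ, parent^[n] v = r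

/-- Number of children of `v` in the rooted tree `T`. -/
def RTree.children {V : Type} [DecidableEq V] {r : V} (T : RTree V r) (v : V) : ℕ :=
  (T.verts.filter fun w => w ≠ r ∧ T.parent w = v).card

/-- `T` is a subtree of the graph `G`: every parent-child pair is an edge of `G`. -/
def RTree.inGraph {V : Type} [DecidableEq V] {r : V} (T : RTree V r) (G : SimpleGraph V) : Prop :=
  ∀ v ∈ T.verts, v ≠ r → G.Adj (T.parent v) v

/-- A bounded rooted-tree packing: `K` subtrees of `G` rooted at `r`, with the total
number of children of each vertex bounded by its capacity. -/
def isPacking {V : Type} [DecidableEq V] [Fintype V] {r : V} (G : SimpleGraph V) (c : V → ℕ)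
    {K : ℕ} (T : Fin K → RTree V r) : Prop :=
  (∀ k, (T k).inGraph G) ∧ ∀ v : V, (∑ k, (T k).children v) ≤ c v

/-- The set of total spanned-vertex counts achievable by bounded rooted-tree packings. -/
def packSums {V : Type} [DecidableEq V] [Fintype V] (G : SimpleGraph V) (c : V → ℕ) (r : V)
    (K : ℕ) : Set ℕ :=
  {S | ∃ T : Fin K → RTree V r, isPacking G c T ∧ S = ∑ k, (T k).verts.card}

/-- Vertices of the 3-SAT reduction graph: the root, variable-gadget vertices,
literal vertices (`lit i true` is `xᵢ`, `lit i false` is `x̄ᵢ`) and clause vertices. -/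
inductive RVert (n m : ℕ) where
  | root : RVert n m
  | idx : Fin n → RVert n m
  | lit : Fin n → Bool → RVert n m
  | cls : Fin m → RVert n m
deriving DecidableEq

/-- The base adjacency relation of the reduction graph. `cl j l` is the `l`-th
literal (variable index, polarity) of clause `j`. -/
def redAdj {n m : ℕ} (cl : Fin m → Fin 3 → Fin n × Bool) : RVert n m → RVert n m → Prop
  | RVert.root, RVert.idx _ => True
  | RVert.idx i, RVert.lit i' _ => i = i'
  | RVert.lit i b, RVert.cls j => ∃ l : Fin 3, cl j l = (i, b)
  | _, _ => False

/-- The 3-SAT reduction graph `G'`. -/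
def redGraph {n m : ℕ} (cl : Fin m → Fin 3 → Fin n × Bool) : SimpleGraph (RVert n m) :=
  SimpleGraph.fromRel (redAdj cl)

/-- The capacity function of the reduction: `c_r = n`, `c_i = 1`,
`c_{xᵢ} = c_{x̄ᵢ} = m`, `c_{C_j} = 0`. -/
def redCap {n m : ℕ} : RVert n m → ℕ
  | RVert.root => n
  | RVert.idx _ => 1
  | RVert.lit _ _ => m
  | RVert.cls _ => 0

/-- Backward direction of the 3-SAT reduction: from a satisfying assignment `φ`, one
obtains a capacity-respecting rooted subtree of `G'` with exactly `1 + 2n + m`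
vertices. -/
theorem reduction_backward (n m : ℕ) (cl : Fin m → Fin 3 → Fin n × Bool)
    (φ : Fin n → Bool) (hφ : ∀ j : Fin m, ∃ l : Fin 3, φ (cl j l).1 = (cl j l).2) :
    ∃ T : RTree (RVert n m) RVert.root,
      T.inGraph (redGraph cl) ∧ (∀ v, T.children v ≤ redCap v) ∧
      T.verts.card = 1 + 2 * n + m := by
  classical
  set l : Fin m → Fin 3 := fun j => (hφ j).choose with hl
  have hlj : ∀ j, φ (cl j (l j)).1 = (cl j (l j)).2 := fun j => (hφ j).choose_spec
  let P : RVert n m → RVert n m := fun v =>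
    match v with
    | RVert.root => RVert.root
    | RVert.idx _ => RVert.root
    | RVert.lit i _ => RVert.idx i
    | RVert.cls j => RVert.lit (cl j (l j)).1 (cl j (l j)).2
  let V : Finset (RVert n m) :=
    {RVert.root} ∪ Finset.univ.image RVert.idx
      ∪ Finset.univ.image (fun i => RVert.lit i (φ i))
      ∪ Finset.univ.image RVert.cls
  have hmem : ∀ v, v ∈ V ↔ (v = RVert.root ∨ (∃ i, v = RVert.idx i) ∨
      (∃ i, v = RVert.lit i (φ i)) ∨ ∃ j, v = RVert.cls j) := by
    intro v
    simp [V, eq_comm]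
  refine ⟨⟨V, ?_, P, ?_, ?_⟩, ?_, ?_, ?_⟩
  · simp [V]
  · intro v hv hvr
    match v with
    | RVert.root => exact absurd rfl hvr
    | RVert.idx i => simp [V, P]
    | RVert.lit i b => simp [V, P]
    | RVert.cls j =>
      show RVert.lit (cl j (l j)).1 (cl j (l j)).2 ∈ V
      rw [hmem]
      exact Or.inr (Or.inr (Or.inl ⟨(cl j (l j)).1, by rw [hlj j]⟩))
  · intro v _
    match v with
    | RVert.root => exact ⟨0, rfl⟩
    | RVert.idx i => exact ⟨1, rfl⟩
    | RVert.lit i b => exact ⟨2, rfl⟩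
    | RVert.cls j => exact ⟨3, rfl⟩
  · intro v hv hvr
    match v with
    | RVert.root => exact absurd rfl hvr
    | RVert.idx i =>
      show (redGraph cl).Adj RVert.root (RVert.idx i)
      simp [redGraph, redAdj]
    | RVert.lit i b =>
      show (redGraph cl).Adj (RVert.idx i) (RVert.lit i b)
      simp [redGraph, redAdj]
    | RVert.cls j =>
      show (redGraph cl).Adj (RVert.lit (cl j (l j)).1 (cl j (l j)).2) (RVert.cls j)
      simp only [redGraph, SimpleGraph.fromRel_adj]
      exact ⟨by simp, Or.inl ⟨l j, by simp⟩⟩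
  · intro v
    match v with
    | RVert.root =>
      show (V.filter fun w => w ≠ RVert.root ∧ P w = RVert.root).card ≤ n
      have hsub : (V.filter fun w => w ≠ RVert.root ∧ P w = RVert.root)
          ⊆ Finset.univ.image RVert.idx := by
        intro w hw
        simp only [Finset.mem_filter] at hw
        obtain ⟨hwV, hwr, hwp⟩ := hw
        match w with
        | RVert.root => exact absurd rfl hwr
        | RVert.idx i => simp
        | RVert.lit i b => exact absurd hwp (by simp [P])
        | RVert.cls j => exact absurd hwp (by simp [P])
      calc _ ≤ (Finset.univ.image (RVert.idx (n := n) (m := m))).card :=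
              Finset.card_le_card hsub
        _ ≤ Finset.univ.card := Finset.card_image_le
        _ = n := by simp
    | RVert.idx i =>
      show (V.filter fun w => w ≠ RVert.root ∧ P w = RVert.idx i).card ≤ 1
      have hsub : (V.filter fun w => w ≠ RVert.root ∧ P w = RVert.idx i)
          ⊆ {RVert.lit i (φ i)} := by
        intro w hw
        simp only [Finset.mem_filter] at hw
        obtain ⟨hwV, hwr, hwp⟩ := hw
        match w with
        | RVert.root => exact absurd rfl hwr
        | RVert.idx i' => exact absurd hwp (by simp [P])
        | RVert.lit i' b =>
          have hi : i' = i := by simpa [P] using hwp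
          have hb : b = φ i' := by
            rcases (hmem (RVert.lit i' b)).1 hwV with h | ⟨_, h⟩ | ⟨i'', h⟩ | ⟨_, h⟩
            · exact absurd h (by simp)
            · exact absurd h (by simp)
            · cases h; rfl
            · exact absurd h (by simp)
          subst hi; subst hb; simp
        | RVert.cls j => exact absurd hwp (by simp [P])
      calc _ ≤ ({RVert.lit i (φ i)} : Finset (RVert n m)).card :=
              Finset.card_le_card hsub
        _ = 1 := rfl
    | RVert.lit a b =>
      show (V.filter fun w => w ≠ RVert.root ∧ P w = RVert.lit a b).card ≤ m
      have hsub : (V.filter fun w => w ≠ RVert.root ∧ P w = RVert.lit a b)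
          ⊆ Finset.univ.image RVert.cls := by
        intro w hw
        simp only [Finset.mem_filter] at hw
        obtain ⟨hwV, hwr, hwp⟩ := hw
        match w with
        | RVert.root => exact absurd rfl hwr
        | RVert.idx i' => exact absurd hwp (by simp [P])
        | RVert.lit i' b' => exact absurd hwp (by simp [P])
        | RVert.cls j => simp
      calc _ ≤ (Finset.univ.image (RVert.cls (n := n) (m := m))).card :=
              Finset.card_le_card hsub
        _ ≤ Finset.univ.card := Finset.card_image_le
        _ = m := by simp
    | RVert.cls j =>
      show (V.filter fun w => w ≠ RVert.root ∧ P w = RVert.cls j).card ≤ 0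
      have : (V.filter fun w => w ≠ RVert.root ∧ P w = RVert.cls j) = ∅ := by
        apply Finset.eq_empty_of_forall_notMem
        intro w hw
        simp only [Finset.mem_filter] at hw
        obtain ⟨hwV, hwr, hwp⟩ := hw
        match w with
        | RVert.root => exact absurd rfl hwr
        | RVert.idx i' => exact absurd hwp (by simp [P])
        | RVert.lit i' b' => exact absurd hwp (by simp [P])
        | RVert.cls j' => exact absurd hwp (by simp [P])
      simp [this]
  · show V.card = 1 + 2 * n + m
    have hinj_idx : Function.Injective (RVert.idx (n := n) (m := m)) := by
      intro a b h; cases h; rfl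
    have hinj_lit : Function.Injective (fun i => RVert.lit (n := n) (m := m) i (φ i)) := by
      intro a b h; cases h; rfl
    have hinj_cls : Function.Injective (RVert.cls (n := n) (m := m)) := by
      intro a b h; cases h; rfl
    have d1 : Disjoint ({RVert.root} : Finset (RVert n m))
        (Finset.univ.image RVert.idx) := by
      simp [Finset.disjoint_left]
    have d2 : Disjoint ({RVert.root} ∪ Finset.univ.image RVert.idx)
        (Finset.univ.image (fun i => RVert.lit (n := n) (m := m) i (φ i))) := by
      rw [Finset.disjoint_left]
      intro a ha hb
      simp only [Finset.mem_image, Finset.mem_union, Finset.mem_singleton] at ha hb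
      obtain ⟨i, -, rfl⟩ := hb
      rcases ha with h | ⟨i', -, h⟩ <;> simp_all
    have d3 : Disjoint ({RVert.root} ∪ Finset.univ.image RVert.idx
        ∪ Finset.univ.image (fun i => RVert.lit (n := n) (m := m) i (φ i)))
        (Finset.univ.image RVert.cls) := by
      rw [Finset.disjoint_left]
      intro a ha hb
      simp only [Finset.mem_image, Finset.mem_union, Finset.mem_singleton] at ha hb
      obtain ⟨j, -, rfl⟩ := hb
      rcases ha with (h | ⟨i', -, h⟩) | ⟨i', -, h⟩ <;> simp_all
    show (({RVert.root} ∪ Finset.univ.image RVert.idx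
        ∪ Finset.univ.image (fun i => RVert.lit i (φ i)))
        ∪ Finset.univ.image RVert.cls).card = 1 + 2 * n + m
    rw [Finset.card_union_of_disjoint d3, Finset.card_union_of_disjoint d2,
      Finset.card_union_of_disjoint d1, Finset.card_image_of_injective _ hinj_idx,
      Finset.card_image_of_injective _ hinj_lit, Finset.card_image_of_injective _ hinj_cls]
    simp; ring
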